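/- (Key inequality in the proof of Theorem 3.) Let ε > 0, m ∈ ℕ, and a, b ∈ ℝ^m. Assume that for every index i with b_i < 0 one has a_i ≤ 0. Let A = { j : b_j ≥ 0 } and for j ∈ A set X_{jj} = 1/max(ε, b_j). Then (1/2) Σ_{j ∈ A} X_{jj} (a_j² − b_j²) ≥ ψ_ε(a) − ψ_ε(b), where ψ_ε(y) = Σ_{i=1}^m φ_ε(y_i). -/

import Mathlib

/-- The regularization `φ_ε` of `s ↦ max 0 s`. -/
noncomputable def phiEps (ε s : ℝ) : ℝ :=
  if s ≤ 0 then ε / 2 else if s ≤ ε then s ^ 2 / (2 * ε) + ε / 2 else s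

/-- `ψ_ε(y) = Σ_i φ_ε(y_i)`. -/
noncomputable def psiEps (ε : ℝ) {m : ℕ} (y : Fin m → ℝ) : ℝ := ∑ i, phiEps ε (y i)

/-!
For `t ≥ ε` the parabola `s ↦ s² / (2t) + t / 2` majorises `φ_ε`, and for `b ≥ 0` it touches `φ_ε`
at `b` when `t = max ε b` (indeed `φ_ε(s) = min_{t ≥ ε} (s² / (2t) + t / 2)` for `s ≥ 0`).
Subtracting the two gives the inequality coordinatewise on `{b ≥ 0}`; off that set `a_i, b_i ≤ 0`,
so both `φ_ε` values equal `ε / 2`.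
-/

lemma phiEps_of_nonpos (ε : ℝ) {s : ℝ} (hs : s ≤ 0) : phiEps ε s = ε / 2 :=
  if_pos hs

lemma phiEps_le_sq_div_add {ε t : ℝ} (s : ℝ) (hε : 0 < ε) (ht : ε ≤ t) :
    phiEps ε s ≤ s ^ 2 / (2 * t) + t / 2 := by
  have ht0 : 0 < t := hε.trans_le ht
  unfold phiEps
  split_ifs with hs hsε
  · have : 0 ≤ s ^ 2 / (2 * t) := by positivity
    linarith
  · have hsq : s ^ 2 ≤ ε * t := by nlinarith
    rw [div_add_div _ _ (by positivity) (by positivity), div_add_div _ _ (by positivity) (by positivity),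
      div_le_div_iff₀ (by positivity) (by positivity)]
    nlinarith [mul_nonneg (sub_nonneg.2 ht) (sub_nonneg.2 hsq), mul_pos hε ht0]
  · rw [div_add_div _ _ (by positivity) (by positivity), le_div_iff₀ (by positivity)]
    nlinarith [sq_nonneg (s - t)]

lemma phiEps_eq_of_nonneg {ε b : ℝ} (hε : 0 ≤ ε) (hb : 0 ≤ b) :
    phiEps ε b = b ^ 2 / (2 * max ε b) + max ε b / 2 := by
  unfold phiEps
  rcases hb.eq_or_lt with rfl | hb
  · simp [hε]
  rcases le_or_gt b ε with hbε | hεb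
  · rw [if_neg hb.not_ge, if_pos hbε, max_eq_left hbε]
  · rw [if_neg hb.not_ge, if_neg hεb.not_ge, max_eq_right hεb.le]
    field_simp
    ring

lemma phiEps_sub_le_of_nonneg {ε b : ℝ} (a : ℝ) (hε : 0 < ε) (hb : 0 ≤ b) :
    phiEps ε a - phiEps ε b ≤ 1 / 2 * (1 / max ε b * (a ^ 2 - b ^ 2)) := by
  have hmax : 0 < max ε b := lt_max_of_lt_left hε
  calc phiEps ε a - phiEps ε b
      ≤ a ^ 2 / (2 * max ε b) + max ε b / 2 - (b ^ 2 / (2 * max ε b) + max ε b / 2) := by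
        rw [phiEps_eq_of_nonneg hε.le hb]
        gcongr
        exact phiEps_le_sq_div_add a hε (le_max_left ε b)
    _ = 1 / 2 * (1 / max ε b * (a ^ 2 - b ^ 2)) := by
        field_simp
        ring

/-- Key inequality in the proof of Theorem 3. -/
theorem stmt9 (ε : ℝ) (hε : 0 < ε) (m : ℕ) (a b : Fin m → ℝ)
    (h : ∀ i, b i < 0 → a i ≤ 0) :
    (1 / 2) * ∑ j ∈ Finset.univ.filter (fun j => 0 ≤ b j),
        (1 / max ε (b j)) * ((a j) ^ 2 - (b j) ^ 2)
      ≥ psiEps ε a - psiEps ε b := by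
  rw [psiEps, psiEps, ge_iff_le, ← Finset.sum_sub_distrib, Finset.mul_sum, Finset.sum_filter]
  refine Finset.sum_le_sum fun i _ => ?_
  split_ifs with hb
  · exact phiEps_sub_le_of_nonneg (a i) hε hb
  · have hb : b i < 0 := not_le.mp hb
    rw [phiEps_of_nonpos ε (h i hb), phiEps_of_nonpos ε hb.le, sub_self]
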